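/- Let B ∈ L(H,K) have closed range, A ∈ L(K)⁺ with (A, R(B)) compatible, and y ∈ K \ R(B). Then u ∈ H is an A-least squares solution of Bx = y (i.e., ‖Bu − y‖_A ≤ ‖Bx − y‖_A for all x) if and only if there exists P ∈ P(A, R(B)) such that Bu = Py. -/

import Mathlib

open ContinuousLinearMap

/-- `P(A,S)`: the set of `A`-Hermitian bounded projections with range `S`. -/
def PAS {K : Type*} [NormedAddCommGroup K] [InnerProductSpace ℂ K] [CompleteSpace K]
    (A : K →L[ℂ] K) (S : Submodule ℂ K) : Set (K →L[ℂ] K) :=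
  {P | P ∘L P = P ∧ LinearMap.range (P : K →ₗ[ℂ] K) = S ∧ A ∘L P = adjoint P ∘L A}

/-!
Perturbing `u` along `R(B)` shows that `u` is an `A`-least squares solution iff
`A (B u - y) ⊥ R(B)`. Given `P₀ ∈ P(A, R(B))`, the vector `z = B u - P₀ y` lies in `R(B)` and `A z`
is orthogonal to `R(B)`, so `⟪A z, z⟫ = 0` and, `A` being positive, `A z = 0`. As `R(B)` is closed
and `y ∉ R(B)`, there is a functional `f` vanishing on `R(B)` with `f y = 1`, and then
`P₀ + f(·) z` is still in `P(A, R(B))` and maps `y` to `B u`. Conversely, for `P ∈ P(A, R(B))` the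
vector `A (P y - y)` is orthogonal to `R(P)`.
-/

open scoped InnerProductSpace

namespace ContinuousLinearMap

variable {𝕜 E : Type*} [RCLike 𝕜] [NormedAddCommGroup E] [InnerProductSpace 𝕜 E]
  {T : E →L[𝕜] E}

theorem _root_.LinearMap.IsSymmetric.reApplyInnerSelf_add (hT : (T : E →ₗ[𝕜] E).IsSymmetric)
    (v w : E) :
    T.reApplyInnerSelf (v + w) =
      T.reApplyInnerSelf v + 2 * RCLike.re ⟪T v, w⟫_𝕜 + T.reApplyInnerSelf w := by
  have hwv : RCLike.re ⟪T w, v⟫_𝕜 = RCLike.re ⟪T v, w⟫_𝕜 := by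
    rw [show ⟪T w, v⟫_𝕜 = ⟪w, T v⟫_𝕜 from hT w v, inner_re_symm]
  simp only [reApplyInnerSelf_apply, map_add, inner_add_left, inner_add_right, hwv]
  ring

theorem IsPositive.reApplyInnerSelf_le_add_iff (hT : T.IsPositive) (S : Submodule 𝕜 E) (v : E) :
    (∀ s ∈ S, T.reApplyInnerSelf v ≤ T.reApplyInnerSelf (v + s)) ↔
      ∀ s ∈ S, ⟪T v, s⟫_𝕜 = 0 := by
  refine ⟨fun hmin w hw => ?_, fun horth s hs => ?_⟩
  · set a := ⟪T v, w⟫_𝕜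
    set q := T.reApplyInnerSelf w
    have hq : 0 ≤ q := hT.re_inner_nonneg_left w
    set t : ℝ := 1 / (q + 1)
    have ht : 0 < t := by positivity
    have htq : t * q < 1 := by
      rw [div_mul_eq_mul_div, one_mul, div_lt_one (by linarith)]; linarith
    -- the first-order term `-2 t ‖a‖²` of this perturbation beats the second-order `t² ‖a‖² q`
    have key := hmin _ (S.smul_mem (-(t : 𝕜) * starRingEnd 𝕜 a) hw)
    rw [hT.isSymmetric.reApplyInnerSelf_add, reApplyInnerSelf_smul, inner_smul_right,
      mul_assoc, RCLike.conj_mul] at key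
    simp only [← RCLike.ofReal_pow, ← RCLike.ofReal_neg, ← RCLike.ofReal_mul, RCLike.ofReal_re,
      norm_mul, RCLike.norm_ofReal, RCLike.norm_conj, abs_neg, abs_of_pos ht] at key
    have hta : t * ‖a‖ ^ 2 ≤ 0 := by
      nlinarith [mul_nonneg (mul_nonneg ht.le (sq_nonneg ‖a‖)) (sub_nonneg.2 htq.le)]
    have ha : ‖a‖ ^ 2 ≤ 0 := nonpos_of_mul_nonpos_right hta ht
    exact norm_eq_zero.mp (pow_eq_zero_iff two_ne_zero |>.mp (le_antisymm ha (by positivity)))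
  · rw [hT.isSymmetric.reApplyInnerSelf_add, horth s hs, map_zero, mul_zero, add_zero]
    exact le_add_of_nonneg_right (hT.re_inner_nonneg_left s)

theorem IsPositive.apply_eq_zero_of_reApplyInnerSelf_eq_zero (hT : T.IsPositive) {z : E}
    (hz : T.reApplyInnerSelf z = 0) : T z = 0 := by
  have horth := (hT.reApplyInnerSelf_le_add_iff ⊤ z).mp fun s _ => by
    rw [hz]; exact hT.re_inner_nonneg_left (z + s)
  exact inner_self_eq_zero.mp (horth (T z) trivial)

variable {F : Type*} [NormedAddCommGroup F] [InnerProductSpace 𝕜 F]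

theorem IsPositive.forall_reApplyInnerSelf_sub_le_iff (hT : T.IsPositive) (B : F →L[𝕜] E)
    (y : E) (u : F) :
    (∀ x, T.reApplyInnerSelf (B u - y) ≤ T.reApplyInnerSelf (B x - y)) ↔
      ∀ s ∈ LinearMap.range (B : F →ₗ[𝕜] E), ⟪T (B u - y), s⟫_𝕜 = 0 := by
  rw [← hT.reApplyInnerSelf_le_add_iff]
  refine ⟨fun hmin _ ⟨h, hh⟩ => ?_, fun hmin x => ?_⟩
  · simpa [← hh, sub_add_eq_add_sub] using hmin (u + h)
  · simpa using hmin (B (x - u)) ⟨x - u, rfl⟩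

end ContinuousLinearMap

theorem Submodule.exists_dual_eq_one_of_notMem {𝕜 E : Type*} [RCLike 𝕜] [NormedAddCommGroup E]
    [InnerProductSpace 𝕜 E] {S : Submodule 𝕜 E} [S.HasOrthogonalProjection] {y : E}
    (hy : y ∉ S) : ∃ f : StrongDual 𝕜 E, f y = 1 ∧ ∀ s ∈ S, f s = 0 := by
  set c := y - S.starProjection y
  have hcS : c ∈ Sᗮ := S.sub_starProjection_mem_orthogonal y
  have hPyS := S.starProjection_apply_mem y
  have hcy : ⟪c, y⟫_𝕜 = ⟪c, c⟫_𝕜 := by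
    rw [← sub_eq_zero, ← inner_sub_right, sub_sub_cancel,
      Submodule.inner_left_of_mem_orthogonal hPyS hcS]
  have hc : c ≠ 0 := fun hc => hy (sub_eq_zero.mp hc ▸ hPyS)
  refine ⟨(⟪c, c⟫_𝕜)⁻¹ • innerSL 𝕜 c, ?_, fun s hs => ?_⟩
  · simp [hcy, hc]
  · simp [Submodule.inner_left_of_mem_orthogonal hs hcS]

section PAS

variable {K : Type*} [NormedAddCommGroup K] [InnerProductSpace ℂ K] [CompleteSpace K]
  {A P : K →L[ℂ] K} {S : Submodule ℂ K}

theorem mem_PAS_iff : P ∈ PAS A S ↔ (∀ w, P w ∈ S) ∧ (∀ s ∈ S, P s = s) ∧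
    ∀ v w, ⟪A (P v), w⟫_ℂ = ⟪A v, P w⟫_ℂ := by
  constructor
  · rintro ⟨hidem, rfl, hAP⟩
    refine ⟨fun w => ⟨w, rfl⟩, ?_, fun v w => ?_⟩
    · rintro _ ⟨t, rfl⟩
      exact congr($hidem t)
    · rw [← comp_apply A P, hAP, comp_apply, adjoint_inner_left]
  · rintro ⟨hmem, hfix, hsymm⟩
    refine ⟨ext fun w => hfix _ (hmem w), le_antisymm ?_ fun s hs => ⟨s, hfix s hs⟩,
      ext fun v => ext_inner_right ℂ fun w => ?_⟩
    · rintro _ ⟨w, rfl⟩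
      exact hmem w
    · rw [comp_apply, comp_apply, adjoint_inner_left, hsymm]

theorem inner_map_apply_eq_of_mem_PAS (hP : P ∈ PAS A S) {s : K} (hs : s ∈ S) (v : K) :
    ⟪A (P v), s⟫_ℂ = ⟪A v, s⟫_ℂ := by
  obtain ⟨-, hfix, hsymm⟩ := mem_PAS_iff.mp hP
  rw [hsymm, hfix s hs]

theorem add_smulRight_mem_PAS (hP : P ∈ PAS A S) (hA : IsSelfAdjoint A) {z : K} (hz : z ∈ S)
    (hAz : A z = 0) {f : StrongDual ℂ K} (hf : ∀ s ∈ S, f s = 0) :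
    P + f.smulRight z ∈ PAS A S := by
  obtain ⟨hmem, hfix, hsymm⟩ := mem_PAS_iff.mp hP
  refine mem_PAS_iff.mpr ⟨fun w => ?_, fun s hs => ?_, fun v w => ?_⟩ <;>
    simp only [add_apply, smulRight_apply]
  · exact S.add_mem (hmem w) (S.smul_mem _ hz)
  · rw [hfix s hs, hf s hs, zero_smul, add_zero]
  · have hAvz : ⟪A v, z⟫_ℂ = 0 := by
      rw [show ⟪A v, z⟫_ℂ = ⟪v, A z⟫_ℂ from hA.isSymmetric v z, hAz, inner_zero_right]
    rw [map_add, map_smul, hAz, smul_zero, add_zero, inner_add_right, inner_smul_right, hAvz,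
      mul_zero, add_zero, hsymm]

end PAS

theorem stmt_15
    {H K : Type*}
    [NormedAddCommGroup H] [InnerProductSpace ℂ H] [CompleteSpace H]
    [NormedAddCommGroup K] [InnerProductSpace ℂ K] [CompleteSpace K]
    (B : H →L[ℂ] K) (hB : IsClosed (LinearMap.range (B : H →ₗ[ℂ] K) : Set K))
    (A : K →L[ℂ] K) (hA : A.IsPositive)
    (hcompat : (PAS A (LinearMap.range (B : H →ₗ[ℂ] K))).Nonempty)
    (y : K) (hy : y ∉ LinearMap.range (B : H →ₗ[ℂ] K)) (u : H) :
    (∀ x : H,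
        (inner ℂ (A (B u - y)) (B u - y) : ℂ).re ≤ (inner ℂ (A (B x - y)) (B x - y) : ℂ).re) ↔
    (∃ P ∈ PAS A (LinearMap.range (B : H →ₗ[ℂ] K)), B u = P y) := by
  set S := LinearMap.range (B : H →ₗ[ℂ] K)
  refine (hA.forall_reApplyInnerSelf_sub_le_iff B y u).trans ⟨fun horth => ?_, ?_⟩
  · obtain ⟨P₀, hP₀⟩ := hcompat
    have : CompleteSpace S := hB.completeSpace_coe
    obtain ⟨f, hfy, hfS⟩ := S.exists_dual_eq_one_of_notMem hy
    set z := B u - P₀ y with hz_def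
    have hz : z ∈ S := S.sub_mem ⟨u, rfl⟩ ((mem_PAS_iff.mp hP₀).1 y)
    have hAzS : ∀ s ∈ S, ⟪A z, s⟫_ℂ = 0 := fun s hs => by
      rw [hz_def, ← sub_sub_sub_cancel_right (B u) (P₀ y) y, map_sub A (B u - y),
        inner_sub_left, map_sub A (P₀ y), inner_sub_left, horth s hs,
        inner_map_apply_eq_of_mem_PAS hP₀ hs, sub_self, sub_zero]
    have hAz : A z = 0 := hA.apply_eq_zero_of_reApplyInnerSelf_eq_zero <| by
      rw [reApplyInnerSelf_apply, hAzS z hz, map_zero]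
    exact ⟨P₀ + f.smulRight z, add_smulRight_mem_PAS hP₀ hA.isSelfAdjoint hz hAz hfS,
      by simp [hfy, z]⟩
  · rintro ⟨P, hP, hBu⟩ s hs
    rw [hBu, map_sub, inner_sub_left, inner_map_apply_eq_of_mem_PAS hP hs, sub_self]
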